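/- Let m, n be positive integers, C ∈ ℝ^{m×n}, ε > 0, and K_{ij} = exp(-C_{ij}/ε). Let a ∈ ℝ^m have strictly positive entries and b^d, b^u ∈ ℝ^n satisfy 0 ≤ b^d ≤ b^u and b^u > 0 entrywise. Suppose u ∈ ℝ^m with u > 0 and q, v ∈ ℝ^n with q, v > 0 satisfy the fixed-point equations u = a / (K(q⊙v)), q = max( b^d / ((Kᵀu)⊙v), 1_n ), and v = min( b^u / ((Kᵀu)⊙q), 1_n ) (all operations entrywise). Then P = diag(u)·K·diag(q⊙v) lies in C(a,b^u,b^d) and is the unique minimizer of ⟨C,P'⟩ - εH(P') over P' ∈ C(a,b^u,b^d). -/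

import Mathlib

/-!
The scaled matrix `P = diag(u) K diag(q ⊙ v)` has the Gibbs form `C + ε log P = f ⊕ g` with dual
potentials `f = ε log u`, `g = ε log (q ⊙ v)`. For such a `P` the entropic cost satisfies
`F(P') - F(P) = ε KL(P' ‖ P) + ⟨f, P' 1 - P 1⟩ + ⟨g, P'ᵀ 1 - Pᵀ 1⟩`.
On the coupling set the row term vanishes, and the fixed-point equations give complementary
slackness: `q_j v_j > 1` forces the `j`-th column sum of `P` down to `b^d_j`, and `q_j v_j < 1`
forces it up to `b^u_j`, so the column term is nonnegative. Strict positivity of the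
Kullback–Leibler term at every `P' ≠ P` gives uniqueness.
-/

open Real Finset InformationTheory

variable {ι κ : Type*}

noncomputable def matrixEntropy [Fintype ι] [Fintype κ] (P : Matrix ι κ ℝ) : ℝ :=
  -∑ i, ∑ j, P i j * (log (P i j) - 1)

noncomputable def entropicCost [Fintype ι] [Fintype κ] (C : Matrix ι κ ℝ) (ε : ℝ)
    (P : Matrix ι κ ℝ) : ℝ :=
  ∑ i, ∑ j, C i j * P i j - ε * matrixEntropy P

lemma mul_klFun_div {x y : ℝ} (hx : 0 < x) (hy : 0 ≤ y) :
    x * klFun (y / x) = y * log y - y * log x - y + x := by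
  rcases hy.eq_or_lt with rfl | hy
  · simp [klFun]
  · rw [klFun_apply, log_div hy.ne' hx.ne']
    field_simp
    ring

section GibbsCoupling

variable [Fintype ι] [Fintype κ] {C P P' : Matrix ι κ ℝ} {ε : ℝ} {f : ι → ℝ} {g : κ → ℝ}

lemma entropicCost_sub_entropicCost (hlog : ∀ i j, C i j + ε * log (P i j) = f i + g j)
    (hP : ∀ i j, 0 < P i j) (hP' : ∀ i j, 0 ≤ P' i j) :
    entropicCost C ε P' - entropicCost C ε P =
      ε * ∑ i, ∑ j, P i j * klFun (P' i j / P i j) +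
        ∑ i, f i * (∑ j, P' i j - ∑ j, P i j) + ∑ j, g j * (∑ i, P' i j - ∑ i, P i j) := by
  have hterm (i j) : (C i j * P' i j + ε * (P' i j * (log (P' i j) - 1))) -
      (C i j * P i j + ε * (P i j * (log (P i j) - 1))) =
      ε * (P i j * klFun (P' i j / P i j)) + (f i + g j) * (P' i j - P i j) := by
    rw [mul_klFun_div (hP i j) (hP' i j), ← hlog]
    ring
  calc entropicCost C ε P' - entropicCost C ε P
      = ∑ i, ∑ j, ((C i j * P' i j + ε * (P' i j * (log (P' i j) - 1))) -
          (C i j * P i j + ε * (P i j * (log (P i j) - 1)))) := by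
        simp only [entropicCost, matrixEntropy, mul_neg, sub_neg_eq_add, mul_sum,
          ← sum_add_distrib, ← sum_sub_distrib]
    _ = ∑ i, ∑ j, (ε * (P i j * klFun (P' i j / P i j)) + (f i + g j) * (P' i j - P i j)) := by
        simp only [hterm]
    _ = _ := by
        simp only [sum_add_distrib, add_mul, mul_sum, mul_sub, sum_sub_distrib]
        rw [sum_comm (f := fun i j => g j * P' i j), sum_comm (f := fun i j => g j * P i j)]
        ring

lemma entropicCost_lt_of_ne (hε : 0 < ε) (hlog : ∀ i j, C i j + ε * log (P i j) = f i + g j)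
    (hP : ∀ i j, 0 < P i j) (hP' : ∀ i j, 0 ≤ P' i j)
    (hdual : 0 ≤ ∑ i, f i * (∑ j, P' i j - ∑ j, P i j) + ∑ j, g j * (∑ i, P' i j - ∑ i, P i j))
    (hne : P' ≠ P) :
    entropicCost C ε P < entropicCost C ε P' := by
  obtain ⟨i₀, j₀, hij⟩ : ∃ i j, P' i j ≠ P i j := by
    by_contra! h
    exact hne (Matrix.ext h)
  have hkl : ∀ i j, 0 ≤ P i j * klFun (P' i j / P i j) := fun i j =>
    mul_nonneg (hP i j).le (klFun_nonneg (div_nonneg (hP' i j) (hP i j).le))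
  have hkl₀ : 0 < P i₀ j₀ * klFun (P' i₀ j₀ / P i₀ j₀) := by
    refine (hkl i₀ j₀).lt_of_ne (Ne.symm (mul_ne_zero (hP i₀ j₀).ne' ?_))
    rwa [Ne, klFun_eq_zero_iff (div_nonneg (hP' i₀ j₀) (hP i₀ j₀).le),
      div_eq_one_iff_eq (hP i₀ j₀).ne']
  have hKL : 0 < ∑ i, ∑ j, P i j * klFun (P' i j / P i j) :=
    sum_pos' (fun i _ => sum_nonneg fun j _ => hkl i j)
      ⟨i₀, mem_univ _, sum_pos' (fun j _ => hkl i₀ j) ⟨j₀, mem_univ _, hkl₀⟩⟩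
  have := entropicCost_sub_entropicCost hlog hP hP'
  linarith [mul_pos hε hKL]

theorem isMinOn_entropicCost_and_unique {S : Set (Matrix ι κ ℝ)} (hε : 0 < ε)
    (hlog : ∀ i j, C i j + ε * log (P i j) = f i + g j) (hP : ∀ i j, 0 < P i j) (hPS : P ∈ S)
    (hS : ∀ P' ∈ S, (∀ i j, 0 ≤ P' i j) ∧
      0 ≤ ∑ i, f i * (∑ j, P' i j - ∑ j, P i j) + ∑ j, g j * (∑ i, P' i j - ∑ i, P i j)) :
    IsMinOn (entropicCost C ε) S P ∧
      ∀ P' ∈ S, IsMinOn (entropicCost C ε) S P' → P' = P := by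
  have hlt : ∀ P' ∈ S, P' ≠ P → entropicCost C ε P < entropicCost C ε P' := fun P' hP'S hne =>
    entropicCost_lt_of_ne hε hlog hP (hS P' hP'S).1 (hS P' hP'S).2 hne
  refine ⟨isMinOn_iff.mpr fun P' hP'S => ?_, fun P' hP'S hmin => ?_⟩
  · rcases eq_or_ne P' P with rfl | hne
    · exact le_rfl
    · exact (hlt P' hP'S hne).le
  · by_contra hne
    exact (isMinOn_iff.mp hmin P hPS).not_gt (hlt P' hP'S hne)

end GibbsCoupling

section Scaling

variable {P K : Matrix ι κ ℝ} {u : ι → ℝ} {w : κ → ℝ}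

lemma sum_row_eq_of_scaling [Fintype κ] (hP : ∀ i j, P i j = u i * K i j * w j) (i : ι) :
    ∑ j, P i j = u i * ∑ j, K i j * w j := by
  simp only [hP, mul_assoc, ← mul_sum]

lemma sum_col_eq_of_scaling [Fintype ι] (hP : ∀ i j, P i j = u i * K i j * w j) (j : κ) :
    ∑ i, P i j = (∑ i, K i j * u i) * w j := by
  simp only [hP, sum_mul]
  exact sum_congr rfl fun i _ => by ring

end Scaling

lemma add_mul_log_mul_exp_mul {c ε x y : ℝ} (hε : ε ≠ 0) (hx : 0 < x) (hy : 0 < y) :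
    c + ε * log (x * exp (-c / ε) * y) = ε * log x + ε * log y := by
  rw [log_mul (by positivity) hy.ne', log_mul hx.ne' (exp_pos _).ne', log_exp]
  field_simp
  ring

section ColumnScaling

variable {s q v lo hi : ℝ}

lemma le_mul_mul_of_eq_max (hs : 0 < s) (hv : 0 < v) (hq : q = max (lo / (s * v)) 1) :
    lo ≤ s * (q * v) := by
  have h : lo / (s * v) ≤ q := hq ▸ le_max_left _ _
  rw [div_le_iff₀ (mul_pos hs hv)] at h
  linarith

lemma mul_mul_le_of_eq_min (hs : 0 < s) (hq : 0 < q) (hv : v = min (hi / (s * q)) 1) :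
    s * (q * v) ≤ hi := by
  have h : v ≤ hi / (s * q) := hv ▸ min_le_left _ _
  rw [le_div_iff₀ (mul_pos hs hq)] at h
  linarith

lemma mul_mul_eq_of_eq_max_of_one_lt (hs : 0 < s) (hv : 0 < v) (hq : q = max (lo / (s * v)) 1)
    (h1 : 1 < q) : s * (q * v) = lo := by
  rcases max_choice (lo / (s * v)) 1 with h | h <;> rw [h] at hq
  · rw [hq]
    field_simp
  · linarith

lemma mul_mul_eq_of_eq_min_of_lt_one (hs : 0 < s) (hq : 0 < q) (hv : v = min (hi / (s * q)) 1)
    (h1 : v < 1) : s * (q * v) = hi := by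
  rcases min_choice (hi / (s * q)) 1 with h | h <;> rw [h] at hv
  · rw [hv]
    field_simp
  · linarith

lemma log_mul_mul_sub_nonneg (hs : 0 < s) (hq : 0 < q) (hv : 0 < v)
    (hfq : q = max (lo / (s * v)) 1) (hfv : v = min (hi / (s * q)) 1) {t : ℝ}
    (hlo : lo ≤ t) (hhi : t ≤ hi) :
    0 ≤ log (q * v) * (t - s * (q * v)) := by
  have hq1 : 1 ≤ q := hfq ▸ le_max_right _ _
  have hv1 : v ≤ 1 := hfv ▸ min_le_right _ _
  rcases lt_trichotomy (q * v) 1 with h | h | h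
  · have hv1' : v < 1 := by nlinarith
    rw [mul_mul_eq_of_eq_min_of_lt_one hs hq hfv hv1']
    exact mul_nonneg_of_nonpos_of_nonpos (log_nonpos (by positivity) h.le) (by linarith)
  · simp [h]
  · have hq1' : 1 < q := by nlinarith
    rw [mul_mul_eq_of_eq_max_of_one_lt hs hv hfq hq1']
    exact mul_nonneg (log_nonneg h.le) (by linarith)

end ColumnScaling

theorem dbot_sinkhorn_fixed_point_optimal_general
    (m n : ℕ) (hm : 0 < m) (hn : 0 < n)
    (C : Matrix (Fin m) (Fin n) ℝ) (ε : ℝ) (hε : 0 < ε)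
    (K : Matrix (Fin m) (Fin n) ℝ)
    (hK : ∀ i j, K i j = Real.exp (-(C i j) / ε))
    (a : Fin m → ℝ)
    (bd bu : Fin n → ℝ)
    (S : Set (Matrix (Fin m) (Fin n) ℝ))
    (hS : S = {P | (∀ i j, 0 ≤ P i j) ∧ (∀ i, ∑ j, P i j = a i) ∧
            (∀ j, bd j ≤ ∑ i, P i j) ∧ (∀ j, ∑ i, P i j ≤ bu j)})
    (u : Fin m → ℝ) (hu : ∀ i, 0 < u i)
    (q v : Fin n → ℝ) (hq : ∀ j, 0 < q j) (hv : ∀ j, 0 < v j)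
    (hfixu : ∀ i, u i = a i / (∑ j, K i j * (q j * v j)))
    (hfixq : ∀ j, q j = max (bd j / ((∑ i, K i j * u i) * v j)) 1)
    (hfixv : ∀ j, v j = min (bu j / ((∑ i, K i j * u i) * q j)) 1)
    (P : Matrix (Fin m) (Fin n) ℝ)
    (hP : ∀ i j, P i j = u i * K i j * (q j * v j)) :
    P ∈ S ∧
    IsMinOn (fun P' : Matrix (Fin m) (Fin n) ℝ =>
        (∑ i, ∑ j, C i j * P' i j) -
          ε * (-(∑ i, ∑ j, P' i j * (Real.log (P' i j) - 1)))) S P ∧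
    (∀ P' ∈ S,
      IsMinOn (fun P' : Matrix (Fin m) (Fin n) ℝ =>
        (∑ i, ∑ j, C i j * P' i j) -
          ε * (-(∑ i, ∑ j, P' i j * (Real.log (P' i j) - 1)))) S P' → P' = P) := by
  have : Nonempty (Fin m) := ⟨⟨0, hm⟩⟩
  have : Nonempty (Fin n) := ⟨⟨0, hn⟩⟩
  have hKpos (i j) : 0 < K i j := hK i j ▸ exp_pos _
  have hrowK (i) : 0 < ∑ j, K i j * (q j * v j) :=
    sum_pos (fun j _ => mul_pos (hKpos i j) (mul_pos (hq j) (hv j))) univ_nonempty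
  have hcolK (j) : 0 < ∑ i, K i j * u i :=
    sum_pos (fun i _ => mul_pos (hKpos i j) (hu i)) univ_nonempty
  have hPpos (i j) : 0 < P i j :=
    hP i j ▸ mul_pos (mul_pos (hu i) (hKpos i j)) (mul_pos (hq j) (hv j))
  have hrow (i) : ∑ j, P i j = a i := by
    rw [sum_row_eq_of_scaling hP, hfixu, div_mul_cancel₀ _ (hrowK i).ne']
  have hcol := sum_col_eq_of_scaling hP
  have hlog (i j) : C i j + ε * log (P i j) = ε * log (u i) + ε * log (q j * v j) := by
    rw [hP, hK]
    exact add_mul_log_mul_exp_mul hε.ne' (hu i) (mul_pos (hq j) (hv j))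
  have hPS : P ∈ S := by
    rw [hS]
    refine ⟨fun i j => (hPpos i j).le, hrow, fun j => ?_, fun j => ?_⟩ <;> rw [hcol]
    · exact le_mul_mul_of_eq_max (hcolK j) (hv j) (hfixq j)
    · exact mul_mul_le_of_eq_min (hcolK j) (hq j) (hfixv j)
  refine ⟨hPS, isMinOn_entropicCost_and_unique hε hlog hPpos hPS fun P' hP'S => ?_⟩
  rw [hS] at hP'S
  obtain ⟨hP'0, hP'row, hP'lo, hP'hi⟩ := hP'S
  refine ⟨hP'0, ?_⟩
  simp only [hP'row, hrow, sub_self, mul_zero, sum_const_zero, zero_add]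
  refine sum_nonneg fun j _ => ?_
  rw [hcol, mul_assoc]
  exact mul_nonneg hε.le (log_mul_mul_sub_nonneg (hcolK j) (hq j) (hv j) (hfixq j) (hfixv j)
    (hP'lo j) (hP'hi j))

/-- if positive scaling vectors (u, q, v) satisfy the
Sinkhorn-Knopp fixed-point equations of DB-OT, then P = diag(u)·K·diag(q⊙v) is
feasible and is the unique minimizer of the entropic DB-OT objective. -/
theorem dbot_sinkhorn_fixed_point_optimal
    (m n : ℕ) (hm : 0 < m) (hn : 0 < n)
    (C : Matrix (Fin m) (Fin n) ℝ) (ε : ℝ) (hε : 0 < ε)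
    (K : Matrix (Fin m) (Fin n) ℝ)
    (hK : ∀ i j, K i j = Real.exp (-(C i j) / ε))
    (a : Fin m → ℝ) (ha : ∀ i, 0 < a i)
    (bd bu : Fin n → ℝ) (hbd : ∀ j, 0 ≤ bd j) (hdu : ∀ j, bd j ≤ bu j)
    (hbu : ∀ j, 0 < bu j)
    (S : Set (Matrix (Fin m) (Fin n) ℝ))
    (hS : S = {P | (∀ i j, 0 ≤ P i j) ∧ (∀ i, ∑ j, P i j = a i) ∧
            (∀ j, bd j ≤ ∑ i, P i j) ∧ (∀ j, ∑ i, P i j ≤ bu j)})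
    (u : Fin m → ℝ) (hu : ∀ i, 0 < u i)
    (q v : Fin n → ℝ) (hq : ∀ j, 0 < q j) (hv : ∀ j, 0 < v j)
    (hfixu : ∀ i, u i = a i / (∑ j, K i j * (q j * v j)))
    (hfixq : ∀ j, q j = max (bd j / ((∑ i, K i j * u i) * v j)) 1)
    (hfixv : ∀ j, v j = min (bu j / ((∑ i, K i j * u i) * q j)) 1)
    (P : Matrix (Fin m) (Fin n) ℝ)
    (hP : ∀ i j, P i j = u i * K i j * (q j * v j)) :
    P ∈ S ∧
    IsMinOn (fun P' : Matrix (Fin m) (Fin n) ℝ =>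
        (∑ i, ∑ j, C i j * P' i j) -
          ε * (-(∑ i, ∑ j, P' i j * (Real.log (P' i j) - 1)))) S P ∧
    (∀ P' ∈ S,
      IsMinOn (fun P' : Matrix (Fin m) (Fin n) ℝ =>
        (∑ i, ∑ j, C i j * P' i j) -
          ε * (-(∑ i, ∑ j, P' i j * (Real.log (P' i j) - 1)))) S P' → P' = P) :=
  dbot_sinkhorn_fixed_point_optimal_general m n hm hn C ε hε K hK a bd bu S hS u hu q v hq hv hfixu
    hfixq hfixv P hP
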